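/- arXiv:2203.03039 — 2 statements merged into one kernel-verified Lean document; each statement's English description precedes it below -/
import Mathlib

section
/- For every I ∈ 𝓘_λ and all fixed values of the variables t and z, the function h ↦ (−h)^{−d_I} · W_I(t; z; h) converges to W°_I(t; z) as |h| → ∞ (i.e., along the cobounded filter on ℂ), where d_I = Σ_{j=1}^{N−1} λ^{(j)} (λ^{(j+1)} − 1) − |σ_I|. -/
/-!
Common setup.  Fix integers `N ≥ 1`, `n ≥ 1` and `λ = (λ_1,…,λ_N) ∈ ℤ_{≥0}^N` with
`λ_1 + ⋯ + λ_N = n` (encoded as `lam : Fin N → ℕ`, 0-indexed).  Positions in `{1,…,n}` are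
encoded as elements of `Fin n` (0-indexed) and block indices in `{1,…,N}` as elements of
`Fin N` (0-indexed).  An element `I = (I_1,…,I_N) ∈ 𝓘_λ` is encoded as a function
`I : Fin N → Finset (Fin n)` satisfying `IsLamPartition`.

The variables `t^{(j)}_a` (`j = 1,…,N−1` the paper's 1-indexed group, `a` 0-indexed within the
group) are encoded as a function `t : ℕ → ℕ → ℂ`; the convention `t^{(N)}_a = z_a` is realized
by `TT`.  The weight functions `W_I`, `W°_I` are realized as functions of the complex variables
(the symmetrizations `W`, `Wcirc` of `Ufun`, `Ucirc`); an identity of polynomials is stated as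
the corresponding identity of these functions at all points where the (cancelling) denominators
do not vanish, which determines the polynomials uniquely.
-/

open scoped Classical

noncomputable section

/-- `λ^{(j)} = λ_1 + ⋯ + λ_j` for `j : ℕ` (so `Lam N lam 0 = 0`, `Lam N lam N = n`). -/
def Lam (N : ℕ) (lam : Fin N → ℕ) (j : ℕ) : ℕ :=
  ∑ k ∈ Finset.univ.filter (fun k : Fin N => (k : ℕ) < j), lam k

/-- `I_1 ∪ ⋯ ∪ I_j` for `j : ℕ` (paper's 1-indexed `j`). -/
def cupI (N n : ℕ) (I : Fin N → Finset (Fin n)) (j : ℕ) : Finset (Fin n) :=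
  (Finset.univ.filter (fun k : Fin N => (k : ℕ) < j)).biUnion I

/-- `i^{(j)}_{a+1}`: the `(a+1)`-th smallest element of `I_1 ∪ ⋯ ∪ I_j`, as a natural number. -/
def idx (N n : ℕ) (I : Fin N → Finset (Fin n)) (j a : ℕ) : ℕ :=
  (((cupI N n I j).sort (· ≤ ·)).map Fin.val).getD a 0

/-- `z_{a+1}` for a natural-number index `a` (junk `0` out of range). -/
def zf (n : ℕ) (z : Fin n → ℂ) (a : ℕ) : ℂ := if h : a < n then z ⟨a, h⟩ else 0

/-- `TT N n t z j a = t^{(j)}_{a+1}` for `j ≤ N−1`, and `= z_{a+1}` for `j = N`. -/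
def TT (N n : ℕ) (t : ℕ → ℕ → ℂ) (z : Fin n → ℂ) (j a : ℕ) : ℂ :=
  if j = N then zf n z a else t j a

/-- `I = (I_1,…,I_N)` is a member of `𝓘_λ`: the `I_j` are pairwise disjoint with union
`{1,…,n}` and `|I_j| = λ_j`. -/
def IsLamPartition (N n : ℕ) (lam : Fin N → ℕ) (I : Fin N → Finset (Fin n)) : Prop :=
  (∀ j, (I j).card = lam j) ∧ ∀ a : Fin n, ∃! j, a ∈ I j

/-- The (finite) set `𝓘_λ`. -/
def partSet (N n : ℕ) (lam : Fin N → ℕ) : Finset (Fin N → Finset (Fin n)) :=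
  Finset.univ.filter fun I => IsLamPartition N n lam I

/-- `I^min ∈ 𝓘_λ`, `I^min_j = {λ^{(j−1)}+1, …, λ^{(j)}}`. -/
def IminF (N n : ℕ) (lam : Fin N → ℕ) : Fin N → Finset (Fin n) := fun j =>
  Finset.univ.filter fun a : Fin n =>
    Lam N lam (j : ℕ) ≤ (a : ℕ) ∧ (a : ℕ) < Lam N lam ((j : ℕ) + 1)

/-- `|σ_I| = #{(a,b) : a ∈ I_i, b ∈ I_j, a < b, i > j}`. -/
def lenI (N n : ℕ) (I : Fin N → Finset (Fin n)) : ℕ :=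
  ((Finset.univ : Finset (Fin n × Fin n)).filter fun p =>
    ∃ i j : Fin N, j < i ∧ p.1 ∈ I i ∧ p.2 ∈ I j ∧ p.1 < p.2).card

/-- The Coxeter length (number of inversions) of a permutation of `{1,…,n}`. -/
def invCount (n : ℕ) (σ : Equiv.Perm (Fin n)) : ℕ :=
  ((Finset.univ : Finset (Fin n × Fin n)).filter fun p =>
    p.1 < p.2 ∧ σ p.2 < σ p.1).card

/-- `σ = σ_I`: `σ` maps, for each `j`, the `k`-th smallest element of `I^min_j` to the `k`-th
smallest element of `I_j`; equivalently `σ(I^min_j) = I_j` and `σ` is increasing on each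
`I^min_j`. -/
def IsSigmaI (N n : ℕ) (lam : Fin N → ℕ) (I : Fin N → Finset (Fin n))
    (σ : Equiv.Perm (Fin n)) : Prop :=
  (∀ j, (IminF N n lam j).image σ = I j) ∧
    ∀ j, ∀ a ∈ IminF N n lam j, ∀ b ∈ IminF N n lam j, a < b → σ a < σ b

/-- `σ(I) = (σ(I_1),…,σ(I_N))`. -/
def sTuple (N n : ℕ) (σ : Equiv.Perm (Fin n)) (I : Fin N → Finset (Fin n)) :
    Fin N → Finset (Fin n) := fun m => (I m).image σ

/-- The function `U_I(t;z;h)`. -/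
def Ufun (N n : ℕ) (lam : Fin N → ℕ) (I : Fin N → Finset (Fin n))
    (t : ℕ → ℕ → ℂ) (z : Fin n → ℂ) (h : ℂ) : ℂ :=
  ∏ j ∈ Finset.Icc 1 (N - 1), ∏ a ∈ Finset.range (Lam N lam j),
    ((∏ c ∈ Finset.range (Lam N lam (j + 1)),
        ((if idx N n I (j + 1) c < idx N n I j a then
            TT N n t z j a - TT N n t z (j + 1) c else 1) *
          (if idx N n I j a < idx N n I (j + 1) c then
            TT N n t z j a - TT N n t z (j + 1) c - h else 1))) *
      ∏ b ∈ Finset.range (Lam N lam j),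
        (if a < b then
          (TT N n t z j b - TT N n t z j a - h) / (TT N n t z j b - TT N n t z j a) else 1))

/-- The function `U°_I(t;z)`. -/
def Ucirc (N n : ℕ) (lam : Fin N → ℕ) (I : Fin N → Finset (Fin n))
    (t : ℕ → ℕ → ℂ) (z : Fin n → ℂ) : ℂ :=
  ∏ j ∈ Finset.Icc 1 (N - 1), ∏ a ∈ Finset.range (Lam N lam j),
    ((∏ c ∈ Finset.range (Lam N lam (j + 1)),
        (if idx N n I (j + 1) c < idx N n I j a then
          TT N n t z j a - TT N n t z (j + 1) c else 1)) *
      ∏ b ∈ Finset.range (Lam N lam j),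
        (if a < b then 1 / (TT N n t z j b - TT N n t z j a) else 1))

/-- The symmetrization group `S_{λ^{(1)}} × ⋯ × S_{λ^{(N−1)}}`: the component `σ k` permutes
the index set `{0,…,λ^{(k+1)}−1}` of the variables of the group `k+1` (paper's 1-indexing),
and the unused component (`k+1 = N`) is the identity. -/
def symSet (N n : ℕ) (lam : Fin N → ℕ) : Finset (Fin N → Equiv.Perm (Fin n)) :=
  Finset.univ.filter fun σ => ∀ k : Fin N, ∀ a : Fin n,
    ((k : ℕ) + 1 = N ∨ Lam N lam ((k : ℕ) + 1) ≤ (a : ℕ)) → σ k a = a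

/-- `t` with the variables of the group `j` (for `1 ≤ j ≤ N−1`) permuted by `σ ⟨j−1⟩`. -/
def permT (N n : ℕ) (σ : Fin N → Equiv.Perm (Fin n)) (t : ℕ → ℕ → ℂ) : ℕ → ℕ → ℂ :=
  fun j a =>
    if h : 1 ≤ j ∧ j ≤ N - 1 ∧ a < n then
      t j ((σ ⟨j - 1, by omega⟩ ⟨a, by omega⟩ : Fin n) : ℕ)
    else t j a

/-- The weight function `W_I(t;z;h)` (as a function of the complex variables). -/
def W (N n : ℕ) (lam : Fin N → ℕ) (I : Fin N → Finset (Fin n))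
    (t : ℕ → ℕ → ℂ) (z : Fin n → ℂ) (h : ℂ) : ℂ :=
  ∑ σ ∈ symSet N n lam, Ufun N n lam I (permT N n σ t) z h

/-- The limiting weight function `W°_I(t;z)` (as a function of the complex variables). -/
def Wcirc (N n : ℕ) (lam : Fin N → ℕ) (I : Fin N → Finset (Fin n))
    (t : ℕ → ℕ → ℂ) (z : Fin n → ℂ) : ℂ :=
  ∑ σ ∈ symSet N n lam, Ucirc N n lam I (permT N n σ t) z

/-- `W̌_I(t;z;h) = W_{σ0(I)}(t; z_n,…,z_1; h)`. -/
def Wcheck (N n : ℕ) (lam : Fin N → ℕ) (I : Fin N → Finset (Fin n))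
    (t : ℕ → ℕ → ℂ) (z : Fin n → ℂ) (h : ℂ) : ℂ :=
  W N n lam (fun j => (I j).image Fin.rev) t (fun a => z a.rev) h

/-- `W̌°_I(t;z) = W°_{σ0(I)}(t; z_n,…,z_1)`. -/
def WcheckCirc (N n : ℕ) (lam : Fin N → ℕ) (I : Fin N → Finset (Fin n))
    (t : ℕ → ℕ → ℂ) (z : Fin n → ℂ) : ℂ :=
  Wcirc N n lam (fun j => (I j).image Fin.rev) t (fun a => z a.rev)

/-- The substitution `t = Σ_I`, i.e. `t^{(k)}_a = z_{i^{(k)}_a}`. -/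
def SigT (N n : ℕ) (I : Fin N → Finset (Fin n)) (z : Fin n → ℂ) : ℕ → ℕ → ℂ :=
  fun j a => zf n z (idx N n I j a)

/-- `c_λ(t;h)`. -/
def clam (N n : ℕ) (lam : Fin N → ℕ) (t : ℕ → ℕ → ℂ) (h : ℂ) : ℂ :=
  ∏ i ∈ Finset.Icc 1 (N - 1), ∏ a ∈ Finset.range (Lam N lam i),
    ∏ b ∈ Finset.range (Lam N lam i), if b ≠ a then t i a - t i b - h else 1

/-- `R_λ(z)`. -/
def Rlam (N n : ℕ) (lam : Fin N → ℕ) (z : Fin n → ℂ) : ℂ :=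
  ∏ i ∈ Finset.Icc 1 (N - 1), ∏ a ∈ Finset.range (Lam N lam i),
    ∏ b ∈ Finset.Ico (Lam N lam i) (Lam N lam (i + 1)), (zf n z a - zf n z b)

/-- `Q_λ(z;h)`. -/
def Qlam (N n : ℕ) (lam : Fin N → ℕ) (z : Fin n → ℂ) (h : ℂ) : ℂ :=
  ∏ i ∈ Finset.Icc 1 (N - 1), ∏ a ∈ Finset.range (Lam N lam i),
    ∏ b ∈ Finset.Ico (Lam N lam i) (Lam N lam (i + 1)), (zf n z a - zf n z b - h)

/-- `V_λ(x;y) = ∏_{i<j} ∏_{a ∈ I^min_i} ∏_{b ∈ I^min_j} (x_a − y_b)`. -/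
def Vlam (N n : ℕ) (lam : Fin N → ℕ) (x y : Fin n → ℂ) : ℂ :=
  ∏ i : Fin N, ∏ j : Fin N,
    if i < j then ∏ a ∈ IminF N n lam i, ∏ b ∈ IminF N n lam j, (x a - y b) else 1

/-- The values of the `t`-variables are pairwise distinct within each group (so that the
cancelling denominators of the weight functions do not vanish). -/
def tDistinct (N n : ℕ) (lam : Fin N → ℕ) (t : ℕ → ℕ → ℂ) : Prop :=
  ∀ j, 1 ≤ j → j ≤ N - 1 → ∀ a b, a < Lam N lam j → b < Lam N lam j → a ≠ b → t j a ≠ t j b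

/-- `M = {min(a,b)+1, …, max(a,b)−1}`. -/
def Mset (n : ℕ) (a b : Fin n) : Finset (Fin n) :=
  Finset.univ.filter fun c => min a b < c ∧ c < max a b

/-- `r_{a,b,I} = |M ∩ I_i| + |M ∩ I_j| + 2|M ∩ (I_{k+1} ∪ ⋯ ∪ I_{l−1})|`,
`k = min(i,j)`, `l = max(i,j)`. -/
def rab (N n : ℕ) (I : Fin N → Finset (Fin n)) (a b : Fin n) (i j : Fin N) : ℕ :=
  (Mset n a b ∩ I i).card + (Mset n a b ∩ I j).card +
    2 * (Mset n a b ∩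
      ((Finset.univ.filter fun k : Fin N => min i j < k ∧ k < max i j)).biUnion I).card

/-- `I_{[a,b]} = I_k ∪ I_{k+1} ∪ ⋯ ∪ I_l`, `k = min(i,j)`, `l = max(i,j)`. -/
def Iab (N n : ℕ) (I : Fin N → Finset (Fin n)) (i j : Fin N) : Finset (Fin n) :=
  ((Finset.univ.filter fun k : Fin N => min i j ≤ k ∧ k ≤ max i j)).biUnion I

/-- `λ_r` for a natural-number index `r` (1-indexed `r+1`; junk `0` out of range). -/
def lamN (N : ℕ) (lam : Fin N → ℕ) (r : ℕ) : ℕ := if h : r < N then lam ⟨r, h⟩ else 0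

/-- `m_{a,b,I} = Σ_{r=k}^{l−1} (λ_r + λ_{r+1})`, `k = min(i,j)`, `l = max(i,j)`. -/
def mab (N : ℕ) (lam : Fin N → ℕ) (i j : Fin N) : ℕ :=
  ∑ r ∈ Finset.Ico (min (i : ℕ) (j : ℕ)) (max (i : ℕ) (j : ℕ)),
    (lamN N lam r + lamN N lam (r + 1))
/-! ### Auxiliary material for the proof -/

open Filter Finset Bornology

/-- `I_m` for a natural-number index `m` (junk `∅` out of range). -/
def blk (N n : ℕ) (I : Fin N → Finset (Fin n)) (m : ℕ) : Finset (Fin n) :=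
  if h : m < N then I ⟨m, h⟩ else ∅

/-- The number of `h`-linear factors in `U_I`. -/
def Dcount (N n : ℕ) (lam : Fin N → ℕ) (I : Fin N → Finset (Fin n)) : ℕ :=
  ∑ j ∈ Finset.Icc 1 (N - 1), ∑ a ∈ Finset.range (Lam N lam j),
    (((Finset.range (Lam N lam (j + 1))).filter
        (fun c => idx N n I j a < idx N n I (j + 1) c)).card +
      ((Finset.range (Lam N lam j)).filter (fun b => a < b)).card)

/-- Counting pairs `x < y`, `x ∈ X`, `y ∈ Y`. -/
def cnt2 {α : Type*} [LinearOrder α] (X Y : Finset α) : ℕ :=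
  ∑ x ∈ X, ∑ y ∈ Y, if x < y then 1 else 0

section Analysis

lemma ev_ne : ∀ᶠ h : ℂ in cobounded ℂ, h ≠ 0 := by
  filter_upwards [eventually_cobounded_le_norm (1 : ℝ)] with h hh h0
  rw [h0] at hh; simp at hh; linarith

lemma tendsto_neg_inv : Tendsto (fun h : ℂ => (-h)⁻¹) (cobounded ℂ) (nhds 0) := by
  simpa [inv_neg] using (tendsto_inv₀_cobounded (α := ℂ)).neg

lemma lemA (x : ℂ) :
    Tendsto (fun h : ℂ => (x - h) * (-h)⁻¹) (cobounded ℂ) (nhds 1) := by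
  have h1 : Tendsto (fun h : ℂ => x * (-h)⁻¹ + 1) (cobounded ℂ) (nhds 1) := by
    simpa using (tendsto_const_nhds.mul tendsto_neg_inv).add (tendsto_const_nhds (x := (1 : ℂ)))
  refine h1.congr' ?_
  filter_upwards [ev_ne] with h h0
  have hw : (-h : ℂ) ≠ 0 := neg_ne_zero.2 h0
  field_simp
  ring

end Analysis
section Utendsto

variable (N n : ℕ) (lam : Fin N → ℕ) (I : Fin N → Finset (Fin n))
  (t : ℕ → ℕ → ℂ) (z : Fin n → ℂ)

/-- The normalized factorization of `(-h)^{-D} U`. -/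
def Phi (h : ℂ) : ℂ :=
  ∏ j ∈ Finset.Icc 1 (N - 1), ∏ a ∈ Finset.range (Lam N lam j),
    ((∏ c ∈ Finset.range (Lam N lam (j + 1)),
        ((if idx N n I (j + 1) c < idx N n I j a then
            TT N n t z j a - TT N n t z (j + 1) c else 1) *
          (if idx N n I j a < idx N n I (j + 1) c then
            (TT N n t z j a - TT N n t z (j + 1) c - h) * (-h)⁻¹ else 1))) *
      ∏ b ∈ Finset.range (Lam N lam j),
        (if a < b then
          (TT N n t z j b - TT N n t z j a - h) / (TT N n t z j b - TT N n t z j a) * (-h)⁻¹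
        else 1))

lemma Phi_tendsto :
    Tendsto (Phi N n lam I t z) (cobounded ℂ) (nhds (Ucirc N n lam I t z)) := by
  unfold Phi Ucirc
  refine tendsto_finset_prod _ fun j _ => tendsto_finset_prod _ fun a _ => Tendsto.mul
    (tendsto_finset_prod _ fun c _ => ?_) (tendsto_finset_prod _ fun b _ => ?_)
  · by_cases hgt : idx N n I j a < idx N n I (j + 1) c
    · simpa [hgt] using
        (tendsto_const_nhds (x := if idx N n I (j + 1) c < idx N n I j a then
            TT N n t z j a - TT N n t z (j + 1) c else 1)).mul
          (lemA (TT N n t z j a - TT N n t z (j + 1) c))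
    · simpa [hgt] using tendsto_const_nhds
  · by_cases hab : a < b
    · have h1 := (lemA (TT N n t z j b - TT N n t z j a)).mul_const
        (TT N n t z j b - TT N n t z j a)⁻¹
      rw [one_mul] at h1
      have h2 : Tendsto
          (fun k : ℂ => (TT N n t z j b - TT N n t z j a - k) * (-k)⁻¹ *
            (TT N n t z j b - TT N n t z j a)⁻¹) (cobounded ℂ)
          (nhds (if a < b then 1 / (TT N n t z j b - TT N n t z j a) else 1)) := by
        simpa [hab, one_div] using h1
      exact h2.congr (fun k => by rw [if_pos hab]; ring)
    · simpa [hab] using tendsto_const_nhds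

lemma key_eq (h : ℂ) (h0 : h ≠ 0) :
    (-h) ^ (-(Dcount N n lam I : ℤ)) * Ufun N n lam I t z h = Phi N n lam I t z h := by
  have hw : (-h : ℂ) ≠ 0 := neg_ne_zero.2 h0
  rw [zpow_neg, zpow_natCast, ← inv_pow]
  unfold Dcount Ufun Phi
  rw [← Finset.prod_pow_eq_pow_sum, ← Finset.prod_mul_distrib]
  refine Finset.prod_congr rfl fun j _ => ?_
  rw [← Finset.prod_pow_eq_pow_sum, ← Finset.prod_mul_distrib]
  refine Finset.prod_congr rfl fun a _ => ?_
  rw [pow_add]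
  have hc : ((-h)⁻¹ : ℂ) ^
        ((Finset.range (Lam N lam (j + 1))).filter
          (fun c => idx N n I j a < idx N n I (j + 1) c)).card *
      ∏ c ∈ Finset.range (Lam N lam (j + 1)),
        ((if idx N n I (j + 1) c < idx N n I j a then
            TT N n t z j a - TT N n t z (j + 1) c else 1) *
          (if idx N n I j a < idx N n I (j + 1) c then
            TT N n t z j a - TT N n t z (j + 1) c - h else 1)) =
      ∏ c ∈ Finset.range (Lam N lam (j + 1)),
        ((if idx N n I (j + 1) c < idx N n I j a then
            TT N n t z j a - TT N n t z (j + 1) c else 1) *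
          (if idx N n I j a < idx N n I (j + 1) c then
            (TT N n t z j a - TT N n t z (j + 1) c - h) * (-h)⁻¹ else 1)) := by
    rw [← Finset.prod_const, Finset.prod_filter, ← Finset.prod_mul_distrib]
    refine Finset.prod_congr rfl fun c _ => ?_
    by_cases hgt : idx N n I j a < idx N n I (j + 1) c <;> simp [hgt, lt_asymm] <;> ring
  have hb : ((-h)⁻¹ : ℂ) ^
        ((Finset.range (Lam N lam j)).filter (fun b => a < b)).card *
      ∏ b ∈ Finset.range (Lam N lam j),
        (if a < b then
          (TT N n t z j b - TT N n t z j a - h) / (TT N n t z j b - TT N n t z j a) else 1) =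
      ∏ b ∈ Finset.range (Lam N lam j),
        (if a < b then
          (TT N n t z j b - TT N n t z j a - h) / (TT N n t z j b - TT N n t z j a) * (-h)⁻¹
        else 1) := by
    rw [← Finset.prod_const, Finset.prod_filter, ← Finset.prod_mul_distrib]
    refine Finset.prod_congr rfl fun b _ => ?_
    by_cases hab : a < b <;> simp [hab] <;> ring
  rw [← hc, ← hb]; ring

lemma Utendsto :
    Tendsto (fun h : ℂ => (-h) ^ (-(Dcount N n lam I : ℤ)) * Ufun N n lam I t z h)
      (cobounded ℂ) (nhds (Ucirc N n lam I t z)) := by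
  refine (Phi_tendsto N n lam I t z).congr' ?_
  filter_upwards [ev_ne] with h h0
  exact (key_eq N n lam I t z h h0).symm

end Utendsto
section Combinatorics

lemma cnt2_comm_form {α : Type*} [LinearOrder α] (X Y : Finset α) :
    cnt2 X Y = ∑ y ∈ Y, ∑ x ∈ X, if x < y then 1 else 0 := Finset.sum_comm

lemma cnt2_self_add {α : Type*} [LinearOrder α] (X : Finset α) :
    cnt2 X X + cnt2 X X + X.card = X.card * X.card := by
  have h2 : cnt2 X X = ∑ x ∈ X, ∑ y ∈ X, if y < x then 1 else 0 := by
    rw [cnt2_comm_form]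
  have h1 : X.card = ∑ x ∈ X, ∑ y ∈ X, if x = y then 1 else 0 := by
    have : ∀ x ∈ X, (∑ y ∈ X, if x = y then 1 else 0) = 1 := by
      intro x hx
      rw [Finset.sum_ite_eq X x (fun _ => 1), if_pos hx]
    rw [Finset.sum_congr rfl this, Finset.sum_const, smul_eq_mul, mul_one]
  calc cnt2 X X + cnt2 X X + X.card
      = ∑ x ∈ X, ∑ y ∈ X,
          ((if x < y then 1 else 0) + (if y < x then 1 else 0) + (if x = y then 1 else 0)) := by
        nth_rewrite 2 [h2]
        rw [h1]
        unfold cnt2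
        simp only [← Finset.sum_add_distrib]
    _ = ∑ _x ∈ X, ∑ _y ∈ X, 1 := by
        refine Finset.sum_congr rfl fun x _ => Finset.sum_congr rfl fun y _ => ?_
        rcases lt_trichotomy x y with h | h | h
        · simp [h, h.ne, h.asymm]
        · simp [h, lt_irrefl]
        · simp [h, h.ne', h.asymm]
    _ = X.card * X.card := by simp [mul_comm]

lemma cnt2_add_swap {α : Type*} [LinearOrder α] [DecidableEq α] (X Y : Finset α) (hd : Disjoint X Y) :
    cnt2 X Y + cnt2 Y X = X.card * Y.card := by
  rw [cnt2_comm_form Y X]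
  unfold cnt2
  rw [← Finset.sum_add_distrib]
  have : ∀ x ∈ X, ((∑ y ∈ Y, if x < y then 1 else 0) + ∑ y ∈ Y, if y < x then 1 else 0)
      = Y.card := by
    intro x hx
    rw [← Finset.sum_add_distrib]
    have : ∀ y ∈ Y, ((if x < y then 1 else 0) + if y < x then 1 else 0) = 1 := by
      intro y hy
      have hne : x ≠ y := by
        intro h; exact (Finset.disjoint_left.1 hd hx (h ▸ hy))
      rcases lt_trichotomy x y with h | h | h
      · simp [h, h.asymm]
      · exact absurd h hne
      · simp [h, h.asymm]
    rw [Finset.sum_congr rfl this, Finset.sum_const, smul_eq_mul, mul_one]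
  rw [Finset.sum_congr rfl this, Finset.sum_const, smul_eq_mul]

lemma cnt2_union_right {α : Type*} [LinearOrder α] [DecidableEq α] (X Y Z : Finset α) (hd : Disjoint Y Z) :
    cnt2 X (Y ∪ Z) = cnt2 X Y + cnt2 X Z := by
  unfold cnt2
  rw [← Finset.sum_add_distrib]
  exact Finset.sum_congr rfl fun x _ => Finset.sum_union hd

end Combinatorics
section Partition

variable {N n : ℕ} {lam : Fin N → ℕ} {I : Fin N → Finset (Fin n)}

lemma I_disjoint (hI : IsLamPartition N n lam I) {i j : Fin N} (hij : i ≠ j) :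
    Disjoint (I i) (I j) := by
  rw [Finset.disjoint_left]
  intro a hai haj
  obtain ⟨k, -, hk⟩ := hI.2 a
  exact hij ((hk i hai).trans (hk j haj).symm)

lemma card_cupI (hI : IsLamPartition N n lam I) (m : ℕ) :
    (cupI N n I m).card = Lam N lam m := by
  unfold cupI Lam
  rw [Finset.card_biUnion fun i _ j _ hij => I_disjoint hI hij]
  exact Finset.sum_congr rfl fun k _ => hI.1 k

lemma cupI_zero : cupI N n I 0 = ∅ := by
  unfold cupI
  have h0 : Finset.univ.filter (fun k : Fin N => (k : ℕ) < 0) = ∅ := by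
    ext k; simp
  simp [h0]

lemma cupI_succ (m : ℕ) : cupI N n I (m + 1) = cupI N n I m ∪ blk N n I m := by
  unfold cupI blk
  by_cases hm : m < N
  · rw [dif_pos hm]
    have : (Finset.univ.filter (fun k : Fin N => (k : ℕ) < m + 1)) =
        insert ⟨m, hm⟩ (Finset.univ.filter (fun k : Fin N => (k : ℕ) < m)) := by
      ext k
      simp only [Finset.mem_filter, Finset.mem_univ, true_and, Finset.mem_insert]
      constructor
      · intro hk
        rcases Nat.lt_succ_iff_lt_or_eq.1 hk with h | h
        · exact Or.inr h
        · exact Or.inl (Fin.ext h)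
      · rintro (rfl | h)
        · exact Nat.lt_succ_self m
        · exact Nat.lt_succ_of_lt h
    rw [this, Finset.biUnion_insert, Finset.union_comm]
  · rw [dif_neg hm, Finset.union_empty]
    congr 1
    ext k
    have := k.2
    simp only [Finset.mem_filter, Finset.mem_univ, true_and]
    omega

lemma disjoint_cupI_blk (hI : IsLamPartition N n lam I) (m : ℕ) :
    Disjoint (cupI N n I m) (blk N n I m) := by
  unfold blk
  by_cases hm : m < N
  · rw [dif_pos hm]
    unfold cupI
    rw [Finset.disjoint_left]
    intro a ha hb
    rw [Finset.mem_biUnion] at ha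
    obtain ⟨k, hk, hak⟩ := ha
    rw [Finset.mem_filter] at hk
    have hne : k ≠ ⟨m, hm⟩ := by
      intro h
      rw [h] at hk
      exact absurd hk.2 (lt_irrefl m)
    exact Finset.disjoint_left.1 (I_disjoint hI hne) hak hb
  · rw [dif_neg hm]; exact Finset.disjoint_empty_right _

lemma card_blk (hI : IsLamPartition N n lam I) (m : ℕ) :
    (blk N n I m).card = lamN N lam m := by
  unfold blk lamN
  by_cases hm : m < N
  · rw [dif_pos hm, dif_pos hm]; exact hI.1 _
  · rw [dif_neg hm, dif_neg hm, Finset.card_empty]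

lemma Lam_succ (m : ℕ) : Lam N lam (m + 1) = Lam N lam m + lamN N lam m := by
  unfold Lam lamN
  by_cases hm : m < N
  · rw [dif_pos hm]
    have : (Finset.univ.filter (fun k : Fin N => (k : ℕ) < m + 1)) =
        insert ⟨m, hm⟩ (Finset.univ.filter (fun k : Fin N => (k : ℕ) < m)) := by
      ext k
      simp only [Finset.mem_filter, Finset.mem_univ, true_and, Finset.mem_insert]
      constructor
      · intro hk
        rcases Nat.lt_succ_iff_lt_or_eq.1 hk with h | h
        · exact Or.inr h
        · exact Or.inl (Fin.ext h)
      · rintro (rfl | h)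
        · exact Nat.lt_succ_self m
        · exact Nat.lt_succ_of_lt h
    rw [this, Finset.sum_insert (by simp)]
    ring
  · rw [dif_neg hm, add_zero]
    congr 1
    ext k
    have := k.2
    simp only [Finset.mem_filter, Finset.mem_univ, true_and]
    omega

/-- Summation over sorted indices equals summation over the finset. -/
lemma sum_idx (I : Fin N → Finset (Fin n)) (m : ℕ) (F : ℕ → ℕ) :
    ∑ a ∈ Finset.range ((cupI N n I m).card), F (idx N n I m a) =
      ∑ e ∈ cupI N n I m, F (e : ℕ) := by
  set s := cupI N n I m with hs
  set l := s.sort (· ≤ ·) with hl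
  have hlen : l.length = s.card := Finset.length_sort _
  have hnd : l.Nodup := s.sort_nodup _
  refine Finset.sum_bij
    (fun a ha => l[a]'(by rw [hlen]; exact Finset.mem_range.1 ha)) ?_ ?_ ?_ ?_
  · intro a ha
    exact (Finset.mem_sort _).1 (l.getElem_mem _)
  · intro a₁ ha₁ a₂ ha₂ hEq
    exact (List.Nodup.getElem_inj_iff hnd).1 hEq
  · intro e he
    obtain ⟨i, hi, hie⟩ := List.mem_iff_getElem.1 ((Finset.mem_sort (· ≤ ·)).2 he)
    exact ⟨i, Finset.mem_range.2 (hlen ▸ hi), hie⟩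
  · intro a ha
    congr 1
    unfold idx
    rw [← hl, List.getD_eq_getElem _ _ (by
      rw [List.length_map, hlen]; exact Finset.mem_range.1 ha)]
    simp

lemma card_idx_filter (I : Fin N → Finset (Fin n)) (m : ℕ) (P : ℕ → Prop) [DecidablePred P] :
    ((Finset.range ((cupI N n I m).card)).filter (fun c => P (idx N n I m c))).card =
      ∑ e ∈ cupI N n I m, if P (e : ℕ) then 1 else 0 := by
  rw [Finset.card_filter]
  exact sum_idx I m (fun v => if P v then 1 else 0)

end Partition
section LenI

variable {N n : ℕ} {lam : Fin N → ℕ} {I : Fin N → Finset (Fin n)}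

lemma mem_unique (hI : IsLamPartition N n lam I) {x : Fin n} {i i' : Fin N}
    (h : x ∈ I i) (h' : x ∈ I i') : i = i' := by
  obtain ⟨k, -, hk⟩ := hI.2 x
  rw [hk i h, hk i' h']

lemma sum_partition (hI : IsLamPartition N n lam I) (f : Fin n → ℕ) :
    ∑ x : Fin n, f x = ∑ i : Fin N, ∑ x ∈ I i, f x := by
  have huniv : (Finset.univ : Finset (Fin n)) = Finset.univ.biUnion I := by
    ext a
    simp only [Finset.mem_univ, Finset.mem_biUnion, true_iff]
    obtain ⟨i, hi, -⟩ := hI.2 a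
    exact ⟨i, trivial, hi⟩
  rw [show ∑ x : Fin n, f x = ∑ x ∈ Finset.univ.biUnion I, f x from by rw [← huniv]]
  exact Finset.sum_biUnion fun i _ j _ hij => I_disjoint hI hij

lemma cnt2_cupI (hI : IsLamPartition N n lam I) (i : Fin N) :
    cnt2 (I i) (cupI N n I (i : ℕ)) =
      ∑ x ∈ I i, ∑ j : Fin N, if (j : ℕ) < (i : ℕ) then
        (∑ y ∈ I j, if x < y then 1 else 0) else 0 := by
  unfold cnt2 cupI
  refine Finset.sum_congr rfl fun x _ => ?_
  rw [Finset.sum_biUnion fun a _ b _ hab => I_disjoint hI hab, Finset.sum_filter]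

lemma lenI_eq_sum (hI : IsLamPartition N n lam I) :
    lenI N n I = ∑ i : Fin N, cnt2 (I i) (cupI N n I (i : ℕ)) := by
  unfold lenI
  rw [Finset.card_filter, Fintype.sum_prod_type, sum_partition hI]
  refine Finset.sum_congr rfl fun i _ => ?_
  rw [cnt2_cupI hI i]
  refine Finset.sum_congr rfl fun x hx => ?_
  rw [sum_partition hI]
  refine Finset.sum_congr rfl fun j _ => ?_
  by_cases hji : (j : ℕ) < (i : ℕ)
  · rw [if_pos hji]
    refine Finset.sum_congr rfl fun y hy => ?_
    congr 1
    apply propext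
    constructor
    · rintro ⟨i', j', hlt, hxi', hyj', hxy⟩
      exact hxy
    · intro hxy
      exact ⟨i, j, by rwa [Fin.lt_def], hx, hy, hxy⟩
  · rw [if_neg hji, Finset.sum_eq_zero]
    intro y hy
    rw [if_neg]
    rintro ⟨i', j', hlt, hxi', hyj', hxy⟩
    rw [mem_unique hI hxi' hx] at hlt
    rw [mem_unique hI hyj' hy] at hlt
    exact hji (by exact_mod_cast hlt)

lemma lenI_eq (hN : 1 ≤ N) (hI : IsLamPartition N n lam I) :
    lenI N n I = ∑ m ∈ Finset.Icc 1 (N - 1), cnt2 (blk N n I m) (cupI N n I m) := by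
  rw [lenI_eq_sum hI]
  have h1 : ∑ i : Fin N, cnt2 (I i) (cupI N n I (i : ℕ)) =
      ∑ m ∈ Finset.range N, cnt2 (blk N n I m) (cupI N n I m) := by
    rw [← Fin.sum_univ_eq_sum_range]
    refine Finset.sum_congr rfl fun i _ => ?_
    congr 1
    unfold blk
    rw [dif_pos i.2]
  rw [h1]
  have h2 : Finset.range N = insert 0 (Finset.Icc 1 (N - 1)) := by
    ext m
    simp only [Finset.mem_range, Finset.mem_insert, Finset.mem_Icc]
    omega
  rw [h2, Finset.sum_insert (by simp)]
  rw [cupI_zero]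
  simp [cnt2]

end LenI

section DcountEq

variable {N n : ℕ} {lam : Fin N → ℕ} {I : Fin N → Finset (Fin n)}

set_option maxHeartbeats 1000000 in
lemma Dcount_eq_sum (hI : IsLamPartition N n lam I) :
    Dcount N n lam I = ∑ m ∈ Finset.Icc 1 (N - 1),
      (cnt2 (cupI N n I m) (cupI N n I (m + 1)) +
        cnt2 (Finset.range (Lam N lam m)) (Finset.range (Lam N lam m))) := by
  unfold Dcount
  refine Finset.sum_congr rfl fun m _ => ?_
  rw [Finset.sum_add_distrib]
  congr 1
  · have hc1 : Lam N lam m = (cupI N n I m).card := (card_cupI hI m).symm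
    have hc2 : Lam N lam (m + 1) = (cupI N n I (m + 1)).card := (card_cupI hI (m + 1)).symm
    rw [hc1, hc2]
    have step1 : ∀ a : ℕ,
        ((Finset.range ((cupI N n I (m + 1)).card)).filter
          (fun c => idx N n I m a < idx N n I (m + 1) c)).card =
        ∑ f ∈ cupI N n I (m + 1), if idx N n I m a < (f : ℕ) then 1 else 0 := fun a =>
      card_idx_filter I (m + 1) (fun v => idx N n I m a < v)
    rw [Finset.sum_congr rfl fun a _ => step1 a]
    rw [sum_idx I m (fun v => ∑ f ∈ cupI N n I (m + 1), if v < (f : ℕ) then 1 else 0)]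
    unfold cnt2
    refine Finset.sum_congr rfl fun e _ => Finset.sum_congr rfl fun f _ => ?_
    simp only [Fin.lt_def]
  · unfold cnt2
    refine Finset.sum_congr rfl fun a _ => ?_
    rw [Finset.card_filter]

set_option maxHeartbeats 1000000 in
lemma Dcount_eq (hN : 1 ≤ N) (hI : IsLamPartition N n lam I) :
    (∑ j ∈ Finset.Icc 1 (N - 1),
        (Lam N lam j : ℤ) * ((Lam N lam (j + 1) : ℤ) - 1)) - (lenI N n I : ℤ) =
      (Dcount N n lam I : ℤ) := by
  rw [lenI_eq hN hI, Dcount_eq_sum hI]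
  push_cast
  rw [← Finset.sum_sub_distrib]
  refine Finset.sum_congr rfl fun m _ => ?_
  have hA := cnt2_self_add (cupI N n I m)
  have hR := cnt2_self_add (Finset.range (Lam N lam m))
  have hS := cnt2_add_swap (cupI N n I m) (blk N n I m) (disjoint_cupI_blk hI m)
  have hU : cnt2 (cupI N n I m) (cupI N n I (m + 1)) =
      cnt2 (cupI N n I m) (cupI N n I m) + cnt2 (cupI N n I m) (blk N n I m) := by
    rw [cupI_succ m]
    exact cnt2_union_right _ _ _ (disjoint_cupI_blk hI m)
  have hL : Lam N lam (m + 1) = Lam N lam m + lamN N lam m := Lam_succ m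
  have hB : (blk N n I m).card = lamN N lam m := card_blk hI m
  have hC : (cupI N n I m).card = Lam N lam m := card_cupI hI m
  rw [hC, hB] at hS
  rw [hC] at hA
  rw [Finset.card_range] at hR
  rw [hL, hU]
  push_cast
  nlinarith [hA, hR, hS]

end DcountEq

/-- For every `I ∈ 𝓘_λ` and fixed `t, z` (with distinct `t`-coordinates within each group,
so that the cancelling denominators do not vanish), `(−h)^{−d_I} W_I(t;z;h) → W°_I(t;z)` as
`|h| → ∞` along the cobounded filter on `ℂ`, where
`d_I = Σ_{j=1}^{N−1} λ^{(j)}(λ^{(j+1)} − 1) − |σ_I|`. -/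
theorem weight_function_limit
    (N n : ℕ) (hN : 1 ≤ N) (hn : 1 ≤ n) (lam : Fin N → ℕ) (hlam : ∑ j, lam j = n)
    (I : Fin N → Finset (Fin n)) (hI : IsLamPartition N n lam I)
    (t : ℕ → ℕ → ℂ) (z : Fin n → ℂ) (ht : tDistinct N n lam t) :
    Filter.Tendsto
      (fun h : ℂ =>
        (-h) ^ (-((∑ j ∈ Finset.Icc 1 (N - 1),
            (Lam N lam j : ℤ) * ((Lam N lam (j + 1) : ℤ) - 1)) - (lenI N n I : ℤ))) *
          W N n lam I t z h)
      (Bornology.cobounded ℂ) (nhds (Wcirc N n lam I t z)) := by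
  have hD : (∑ j ∈ Finset.Icc 1 (N - 1),
      (Lam N lam j : ℤ) * ((Lam N lam (j + 1) : ℤ) - 1)) - (lenI N n I : ℤ) =
      (Dcount N n lam I : ℤ) := Dcount_eq hN hI
  simp only [hD, W, Wcirc, Finset.mul_sum]
  exact tendsto_finset_sum _ fun σ _ => Utendsto N n lam I (permT N n σ t) z
end
end

section
/- For all x, z ∈ ℂ^n and every y ∈ ℂ^n with pairwise distinct coordinates, V_λ(x; z) = Σ_{I ∈ 𝓘_λ} V_λ(x; y_{σ_I}) · V_λ(y_{σ_I}; z) / V_λ(y_{σ_I}; y_{σ_I}). -/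
/-!
Common setup.  Fix integers `N ≥ 1`, `n ≥ 1` and `λ = (λ_1,…,λ_N) ∈ ℤ_{≥0}^N` with
`λ_1 + ⋯ + λ_N = n` (encoded as `lam : Fin N → ℕ`, 0-indexed).  Positions in `{1,…,n}` are
encoded as elements of `Fin n` (0-indexed) and block indices in `{1,…,N}` as elements of
`Fin N` (0-indexed).  An element `I = (I_1,…,I_N) ∈ 𝓘_λ` is encoded as a function
`I : Fin N → Finset (Fin n)` satisfying `IsLamPartition`.

The variables `t^{(j)}_a` (`j = 1,…,N−1` the paper's 1-indexed group, `a` 0-indexed within the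
group) are encoded as a function `t : ℕ → ℕ → ℂ`; the convention `t^{(N)}_a = z_a` is realized
by `TT`.  The weight functions `W_I`, `W°_I` are realized as functions of the complex variables
(the symmetrizations `W`, `Wcirc` of `Ufun`, `Ucirc`); an identity of polynomials is stated as
the corresponding identity of these functions at all points where the (cancelling) denominators
do not vanish, which determines the polynomials uniquely.
-/

open scoped Classical

noncomputable section

namespace VlamAux

open Finset Polynomial

variable {N n : ℕ} (lam : Fin N → ℕ)

lemma Lam_mono : Monotone (Lam N lam) := fun i j hij =>
  Finset.sum_le_sum_of_subset (fun k hk => by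
    simp only [Finset.mem_filter, Finset.mem_univ, true_and] at hk ⊢; omega)

lemma Lam_le (hlam : ∑ j, lam j = n) (j : ℕ) : Lam N lam j ≤ n := by
  rw [← hlam]; exact Finset.sum_le_sum_of_subset (Finset.filter_subset _ _)

lemma Lam_N (hlam : ∑ j, lam j = n) : Lam N lam N = n := by
  rw [← hlam]; unfold Lam; congr 1; ext k; simp [k.isLt]

lemma Lam_succ (i : Fin N) : Lam N lam ((i : ℕ) + 1) = Lam N lam i + lam i := by
  unfold Lam
  have h : (Finset.univ.filter (fun k : Fin N => (k : ℕ) < (i : ℕ) + 1))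
      = insert i (Finset.univ.filter (fun k : Fin N => (k : ℕ) < (i : ℕ))) := by
    ext k
    simp only [Finset.mem_filter, Finset.mem_univ, true_and, Finset.mem_insert, Fin.ext_iff]
    omega
  rw [h, Finset.sum_insert (by simp), add_comm]

lemma mem_IminF (a : Fin n) (i : Fin N) :
    a ∈ IminF N n lam i ↔ Lam N lam i ≤ (a : ℕ) ∧ (a : ℕ) < Lam N lam ((i : ℕ) + 1) := by
  simp [IminF]

lemma IminF_unique (hlam : ∑ j, lam j = n) (a : Fin n) :
    ∃! i : Fin N, a ∈ IminF N n lam i := by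
  have hNn : Lam N lam N = n := Lam_N lam hlam
  have ha : (a : ℕ) < n := a.isLt
  have h0 : Lam N lam 0 = 0 := by simp [Lam]
  have hspec : Lam N lam (Nat.findGreatest (fun m => Lam N lam m ≤ (a : ℕ)) N) ≤ (a : ℕ) :=
    Nat.findGreatest_spec (P := fun m => Lam N lam m ≤ (a : ℕ)) (Nat.zero_le N)
      (show Lam N lam 0 ≤ (a : ℕ) by omega)
  have hi0N : Nat.findGreatest (fun m => Lam N lam m ≤ (a : ℕ)) N ≤ N := Nat.findGreatest_le N
  set i0 := Nat.findGreatest (fun m => Lam N lam m ≤ (a : ℕ)) N with hi0def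
  have hi0lt : i0 < N := by
    rcases eq_or_lt_of_le hi0N with h | h
    · exfalso; rw [h, hNn] at hspec; omega
    · exact h
  have hnext : ¬ Lam N lam (i0 + 1) ≤ (a : ℕ) := by
    exact Nat.findGreatest_is_greatest (P := fun m => Lam N lam m ≤ (a : ℕ)) (n := N)
      (k := i0 + 1) (by omega) (by omega)
  refine ⟨⟨i0, hi0lt⟩, (mem_IminF lam a _).2 ⟨hspec, (by omega : (a : ℕ) < Lam N lam (i0 + 1))⟩, ?_⟩
  intro j hj
  rw [mem_IminF] at hj
  obtain ⟨hj1, hj2⟩ := hj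
  have hmono := Lam_mono lam
  apply Fin.ext
  show (j : ℕ) = i0
  by_contra hne
  rcases Nat.lt_or_ge (j : ℕ) i0 with h | h
  · have : Lam N lam ((j : ℕ) + 1) ≤ Lam N lam i0 := hmono (by omega)
    omega
  · have : Lam N lam (i0 + 1) ≤ Lam N lam j := hmono (by omega)
    omega

lemma card_IminF (hlam : ∑ j, lam j = n) (i : Fin N) :
    (IminF N n lam i).card = lam i := by
  have h1 : Finset.image Fin.val (IminF N n lam i)
      = Finset.Ico (Lam N lam i) (Lam N lam ((i : ℕ) + 1)) := by
    ext m
    simp only [Finset.mem_image, Finset.mem_Ico]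
    constructor
    · rintro ⟨a, ha, rfl⟩; exact (mem_IminF lam a i).1 ha
    · rintro ⟨hm1, hm2⟩
      have hm : m < n := lt_of_lt_of_le hm2 (Lam_le lam hlam _)
      exact ⟨⟨m, hm⟩, (mem_IminF lam _ i).2 ⟨hm1, hm2⟩, rfl⟩
  have h2 := congrArg Finset.card h1
  rw [Finset.card_image_of_injective _ Fin.val_injective, Nat.card_Ico] at h2
  rw [h2, Lam_succ]
  omega

lemma IminF_lt {i j : Fin N} (hij : i < j) {a b : Fin n}
    (ha : a ∈ IminF N n lam i) (hb : b ∈ IminF N n lam j) : a < b := by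
  rw [mem_IminF] at ha hb
  have h : Lam N lam ((i : ℕ) + 1) ≤ Lam N lam (j : ℕ) := Lam_mono lam hij
  exact Fin.lt_def.2 (by omega)

variable {lam}

lemma sum_block {I : Fin N → Finset (Fin n)} (hI : IsLamPartition N n lam I)
    (b : Fin n → Fin N) (hb : ∀ p, p ∈ I (b p)) :
    ∑ p : Fin n, ((b p : ℕ)) = ∑ i : Fin N, (i : ℕ) * lam i := by
  have hmaps : ∀ p ∈ (Finset.univ : Finset (Fin n)), b p ∈ (Finset.univ : Finset (Fin N)) :=
    fun _ _ => Finset.mem_univ _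
  rw [← Finset.sum_fiberwise_of_maps_to hmaps (fun p => ((b p : ℕ)))]
  refine Finset.sum_congr rfl fun i _ => ?_
  have hfil : Finset.univ.filter (fun p => b p = i) = I i := by
    ext p
    simp only [Finset.mem_filter, Finset.mem_univ, true_and]
    constructor
    · rintro rfl; exact hb p
    · intro hp; exact ((hI.2 p).unique (hb p) hp).symm ▸ rfl
  rw [hfil]
  have : ∀ p ∈ I i, ((b p : ℕ)) = (i : ℕ) := by
    intro p hp
    have : b p = i := (hI.2 p).unique (hb p) hp
    rw [this]
  rw [Finset.sum_congr rfl this, Finset.sum_const, hI.1 i, smul_eq_mul, mul_comm]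

lemma blocks_eq (hlam : ∑ j, lam j = n) {I J : Fin N → Finset (Fin n)}
    (hI : IsLamPartition N n lam I) (hJ : IsLamPartition N n lam J)
    (h : ∀ p : Fin n, ∀ i j : Fin N, p ∈ J i → p ∈ I j → ¬ i < j) : I = J := by
  set bI := fun p => (hI.2 p).choose with hbI
  set bJ := fun p => (hJ.2 p).choose with hbJ
  have hbIp : ∀ p, p ∈ I (bI p) := fun p => (hI.2 p).choose_spec.1
  have hbJp : ∀ p, p ∈ J (bJ p) := fun p => (hJ.2 p).choose_spec.1
  have hle : ∀ p : Fin n, (bI p : ℕ) ≤ (bJ p : ℕ) := by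
    intro p
    have := h p (bJ p) (bI p) (hbJp p) (hbIp p)
    simp only [Fin.lt_def, not_lt] at this
    exact this
  have hsumI : ∑ p : Fin n, ((bI p : ℕ)) = ∑ i : Fin N, (i : ℕ) * lam i :=
    sum_block hI bI hbIp
  have hsumJ : ∑ p : Fin n, ((bJ p : ℕ)) = ∑ i : Fin N, (i : ℕ) * lam i :=
    sum_block hJ bJ hbJp
  have heq : ∀ p ∈ (Finset.univ : Finset (Fin n)), (bI p : ℕ) = (bJ p : ℕ) :=
    (Finset.sum_eq_sum_iff_of_le (fun p _ => hle p)).1 (hsumI.trans hsumJ.symm)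
  have hbij : ∀ p, bI p = bJ p := fun p => Fin.ext (heq p (Finset.mem_univ p))
  funext i
  ext p
  constructor
  · intro hp
    have : bI p = i := (hI.2 p).unique (hbIp p) hp
    rw [← this, hbij p]; exact hbJp p
  · intro hp
    have : bJ p = i := (hJ.2 p).unique (hbJp p) hp
    rw [← this, ← hbij p]; exact hbIp p

lemma Vlam_eq_zero (lam : Fin N → ℕ) {u v : Fin n → ℂ} {i j : Fin N} (hij : i < j) {a b : Fin n}
    (ha : a ∈ IminF N n lam i) (hb : b ∈ IminF N n lam j) (huv : u a = v b) :
    Vlam N n lam u v = 0 := by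
  unfold Vlam
  apply Finset.prod_eq_zero (Finset.mem_univ i)
  apply Finset.prod_eq_zero (Finset.mem_univ j)
  rw [if_pos hij]
  apply Finset.prod_eq_zero ha
  apply Finset.prod_eq_zero hb
  rw [huv, sub_self]

lemma Vlam_reindex (lam : Fin N → ℕ) {v : Fin n → ℂ} (y : Fin n → ℂ) {c g : Fin n → Fin n}
    (hc : Function.Injective c) (hg : Function.Injective g)
    (him : ∀ i : Fin N, (IminF N n lam i).image c = (IminF N n lam i).image g) :
    Vlam N n lam (fun a => y (c a)) v = Vlam N n lam (fun a => y (g a)) v := by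
  unfold Vlam
  refine Finset.prod_congr rfl fun i _ => Finset.prod_congr rfl fun j _ => ?_
  split_ifs with h
  · have key : ∀ f : Fin n → Fin n, Function.Injective f →
        (IminF N n lam i).image f = (IminF N n lam i).image c →
        ∏ a ∈ IminF N n lam i, ∏ b ∈ IminF N n lam j, (y (f a) - v b)
          = ∏ p ∈ (IminF N n lam i).image c, ∏ b ∈ IminF N n lam j, (y p - v b) := by
      intro f hf hfim
      rw [← hfim, Finset.prod_image (fun a _ b _ hab => hf hab)]
    rw [key c hc rfl, key g hg (him i).symm]
  · rfl

lemma Vlam_ne_zero (lam : Fin N → ℕ) {y : Fin n → ℂ} (hy : ∀ a b : Fin n, a ≠ b → y a ≠ y b)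
    (σ : Fin n → Fin n) (hσ : Function.Injective σ) :
    Vlam N n lam (fun a => y (σ a)) (fun a => y (σ a)) ≠ 0 := by
  unfold Vlam
  rw [Finset.prod_ne_zero_iff]
  intro i _
  rw [Finset.prod_ne_zero_iff]
  intro j _
  split_ifs with h
  · rw [Finset.prod_ne_zero_iff]
    intro a ha
    rw [Finset.prod_ne_zero_iff]
    intro b hb
    have hab : a < b := IminF_lt lam h ha hb
    exact sub_ne_zero_of_ne (hy _ _ (fun he => absurd (hσ he) (ne_of_lt hab)))
  · exact one_ne_zero

/-- The univariate polynomial representing `w ↦ Vlam (update x a w) v`. -/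
def PV (N n : ℕ) (lam : Fin N → ℕ) (x v : Fin n → ℂ) (a : Fin n) : Polynomial ℂ :=
  ∏ i : Fin N, ∏ j : Fin N,
    if i < j then
      ∏ a' ∈ IminF N n lam i, ∏ b ∈ IminF N n lam j,
        (if a' = a then Polynomial.X - Polynomial.C (v b) else Polynomial.C (x a' - v b))
    else 1

lemma PV_eval (lam : Fin N → ℕ) (x v : Fin n → ℂ) (a : Fin n) (w : ℂ) :
    (PV N n lam x v a).eval w = Vlam N n lam (Function.update x a w) v := by
  unfold PV Vlam
  rw [Polynomial.eval_prod]
  refine Finset.prod_congr rfl fun i _ => ?_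
  rw [Polynomial.eval_prod]
  refine Finset.prod_congr rfl fun j _ => ?_
  split_ifs with h
  · rw [Polynomial.eval_prod]
    refine Finset.prod_congr rfl fun a' _ => ?_
    rw [Polynomial.eval_prod]
    refine Finset.prod_congr rfl fun b _ => ?_
    by_cases ha : a' = a
    · subst ha; simp [Function.update_self]
    · simp [ha, Function.update_of_ne ha]
  · simp

lemma PV_natDegree (lam : Fin N → ℕ) (hlam : ∑ j, lam j = n) (x v : Fin n → ℂ) (a : Fin n) :
    (PV N n lam x v a).natDegree ≤ n - 1 - (a : ℕ) := by
  obtain ⟨i0, hi0, hi0u⟩ := IminF_unique lam hlam a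
  have key : (PV N n lam x v a).natDegree ≤
      ∑ i : Fin N, ∑ j : Fin N, (if i < j ∧ a ∈ IminF N n lam i then lam j else 0) := by
    refine (Polynomial.natDegree_prod_le _ _).trans (Finset.sum_le_sum fun i _ => ?_)
    refine (Polynomial.natDegree_prod_le _ _).trans (Finset.sum_le_sum fun j _ => ?_)
    by_cases hlt : i < j
    · rw [if_pos hlt]
      by_cases hmem : a ∈ IminF N n lam i
      · rw [if_pos ⟨hlt, hmem⟩]
        refine (Polynomial.natDegree_prod_le _ _).trans ?_
        have hb : ∀ a' ∈ IminF N n lam i,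
            (∏ b ∈ IminF N n lam j,
              (if a' = a then Polynomial.X - Polynomial.C (v b)
                else Polynomial.C (x a' - v b))).natDegree
              ≤ if a' = a then lam j else 0 := by
          intro a' _
          by_cases he : a' = a
          · subst he
            simp only [if_pos rfl]
            refine (Polynomial.natDegree_prod_le _ _).trans ?_
            have hcst : (∑ _b ∈ IminF N n lam j, 1) = lam j := by
              rw [Finset.sum_const, smul_eq_mul, mul_one, card_IminF lam hlam]
            exact le_trans
              (Finset.sum_le_sum fun b _ => (Polynomial.natDegree_X_sub_C (v b)).le) hcst.le
          · simp only [if_neg he]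
            exact (Polynomial.natDegree_prod_le _ _).trans
              (le_of_eq (Finset.sum_eq_zero fun b _ => Polynomial.natDegree_C _))
        refine (Finset.sum_le_sum hb).trans ?_
        rw [Finset.sum_ite_eq' (IminF N n lam i) a (fun _ => lam j), if_pos hmem]
      · rw [if_neg (fun hc => hmem hc.2)]
        refine (Polynomial.natDegree_prod_le _ _).trans (le_of_eq ?_)
        refine Finset.sum_eq_zero fun a' ha' => ?_
        have hne : ¬ a' = a := fun he => hmem (he ▸ ha')
        simp only [if_neg hne]
        exact Nat.le_zero.mp ((Polynomial.natDegree_prod_le _ _).trans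
          (le_of_eq (Finset.sum_eq_zero fun b _ => Polynomial.natDegree_C _)))
    · rw [if_neg hlt, if_neg (fun hc => hlt hc.1)]
      simp
  have hsum : ∑ i : Fin N, ∑ j : Fin N, (if i < j ∧ a ∈ IminF N n lam i then lam j else 0)
      = ∑ j ∈ Finset.univ.filter (fun j : Fin N => i0 < j), lam j := by
    rw [Finset.sum_eq_single i0]
    · rw [Finset.sum_filter]
      exact Finset.sum_congr rfl fun j _ => by simp [hi0]
    · intro i _ hne
      refine Finset.sum_eq_zero fun j _ => ?_
      rw [if_neg]
      rintro ⟨_, h2⟩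
      exact hne (hi0u i h2)
    · intro h
      exact absurd (Finset.mem_univ i0) h
  have hsplit : Lam N lam ((i0 : ℕ) + 1)
      + ∑ j ∈ Finset.univ.filter (fun j : Fin N => i0 < j), lam j = n := by
    have hparts := Finset.sum_filter_add_sum_filter_not
      (Finset.univ : Finset (Fin N)) (fun j : Fin N => (j : ℕ) < (i0 : ℕ) + 1) lam
    rw [hlam] at hparts
    have h1 : Lam N lam ((i0 : ℕ) + 1)
        = ∑ j ∈ Finset.univ.filter (fun j : Fin N => (j : ℕ) < (i0 : ℕ) + 1), lam j := rfl
    have h2 : Finset.univ.filter (fun j : Fin N => ¬ (j : ℕ) < (i0 : ℕ) + 1)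
        = Finset.univ.filter (fun j : Fin N => i0 < j) := by
      ext j
      simp only [Finset.mem_filter, Finset.mem_univ, true_and, Fin.lt_def]
      omega
    rw [h1, ← h2]
    exact hparts
  have ha2 : (a : ℕ) < Lam N lam ((i0 : ℕ) + 1) := ((mem_IminF lam a i0).1 hi0).2
  have hfin := key
  rw [hsum] at hfin
  omega

lemma card_filter_lt (n k : ℕ) (hk : k ≤ n) :
    (Finset.univ.filter (fun a : Fin n => (a : ℕ) < k)).card = k := by
  have h1 : Finset.image Fin.val (Finset.univ.filter (fun a : Fin n => (a : ℕ) < k))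
      = Finset.range k := by
    ext m
    simp only [Finset.mem_image, Finset.mem_filter, Finset.mem_univ, true_and,
      Finset.mem_range]
    constructor
    · rintro ⟨a, h, rfl⟩; exact h
    · intro h; exact ⟨⟨m, lt_of_lt_of_le h hk⟩, h, rfl⟩
  have h2 := congrArg Finset.card h1
  rwa [Finset.card_image_of_injective _ Fin.val_injective, Finset.card_range] at h2

lemma vanish {n : ℕ} {y : Fin n → ℂ} (hy : Function.Injective y) :
    ∀ k : ℕ, k ≤ n → ∀ P : (Fin n → ℂ) → ℂ,
      (∀ a : Fin n, (a : ℕ) < k → ∀ x : Fin n → ℂ, ∃ p : Polynomial ℂ,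
        p.natDegree ≤ n - 1 - (a : ℕ) ∧ ∀ w, P (Function.update x a w) = p.eval w) →
      (∀ x x' : Fin n → ℂ, (∀ a : Fin n, (a : ℕ) < k → x a = x' a) → P x = P x') →
      (∀ c : Fin n → Fin n, Function.Injective c → P (fun a => y (c a)) = 0) →
      ∀ x, P x = 0 := by
  intro k
  induction k with
  | zero =>
    intro _ P _ hdep hvan x
    rw [hdep x (fun a => y a) (fun a ha => absurd ha (Nat.not_lt_zero _))]
    exact hvan id Function.injective_id
  | succ k ih =>
    intro hk P hdeg hdep hvan
    have hkn : k < n := hk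
    set K : Fin n := ⟨k, hkn⟩ with hK
    have stepA : ∀ c : Fin n → Fin n, Function.Injective c → ∀ w,
        P (Function.update (fun a => y (c a)) K w) = 0 := by
      intro c hc w
      obtain ⟨p, hpdeg, hpeval⟩ := hdeg K (Nat.lt_succ_self k) (fun a => y (c a))
      have hcsurj : Function.Surjective c := Finite.injective_iff_surjective.mp hc
      have hp0 : p = 0 := by
        set T := Finset.image c (Finset.univ.filter (fun a : Fin n => (a : ℕ) < k)) with hT
        have hTcard : T.card = k := by
          rw [hT, Finset.card_image_of_injective _ hc, card_filter_lt n k (le_of_lt hkn)]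
        apply Polynomial.eq_zero_of_natDegree_lt_card_of_eval_eq_zero' p (Finset.image y Tᶜ)
        · intro w' hw'
          obtain ⟨m, hm, rfl⟩ := Finset.mem_image.1 hw'
          rw [Finset.mem_compl] at hm
          obtain ⟨jj, hjj⟩ := hcsurj m
          have hjk : ¬ ((jj : ℕ) < k) := fun hlt => hm (Finset.mem_image.2
            ⟨jj, Finset.mem_filter.2 ⟨Finset.mem_univ _, hlt⟩, hjj⟩)
          set c' := c ∘ (Equiv.swap K jj) with hc'
          have hc'inj : Function.Injective c' := hc.comp (Equiv.injective _)
          have hc'K : c' K = m := by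
            rw [hc']; simp only [Function.comp_apply, Equiv.swap_apply_left]; exact hjj
          have hc'a : ∀ a : Fin n, (a : ℕ) < k → c' a = c a := by
            intro a ha
            have h1 : a ≠ K := fun h => by rw [h] at ha; simp [hK] at ha
            have h2 : a ≠ jj := fun h => hjk (h ▸ ha)
            rw [hc']
            simp only [Function.comp_apply, Equiv.swap_apply_of_ne_of_ne h1 h2]
          rw [← hpeval]
          rw [← hvan c' hc'inj]
          apply hdep
          intro a ha
          by_cases haK : a = K
          · subst haK; rw [Function.update_self, hc'K]
          · have haval : (a : ℕ) < k := by
              have : (a : ℕ) ≠ k := fun h => haK (Fin.ext h)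
              omega
            rw [Function.update_of_ne haK, hc'a a haval]
        · rw [Finset.card_image_of_injective _ hy, Finset.card_compl, hTcard]
          simp only [Finset.card_univ, Fintype.card_fin]
          have : (K : ℕ) = k := rfl
          omega
      rw [hpeval w, hp0, Polynomial.eval_zero]
    intro x
    have hPx : P x = P (Function.update x K (x K)) := by rw [Function.update_eq_self]
    rw [hPx]
    refine ih (by omega) (fun x' => P (Function.update x' K (x K))) ?_ ?_ ?_ x
    · intro a ha x'
      obtain ⟨p, hpdeg, hpeval⟩ := hdeg a (by omega) (Function.update x' K (x K))
      refine ⟨p, hpdeg, fun w => ?_⟩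
      have haK : a ≠ K := fun h => by rw [h] at ha; simp [hK] at ha
      show P (Function.update (Function.update x' a w) K (x K)) = Polynomial.eval w p
      rw [Function.update_comm haK]
      exact hpeval w
    · intro x1 x2 hagree
      apply hdep
      intro a ha
      by_cases haK : a = K
      · subst haK; rw [Function.update_self, Function.update_self]
      · have haval : (a : ℕ) < k := by
          have : (a : ℕ) ≠ k := fun h => haK (Fin.ext h)
          omega
        rw [Function.update_of_ne haK, Function.update_of_ne haK, hagree a haval]
    · intro c hcinj
      exact stepA c hcinj (x K)

end VlamAux

/-- `V_λ(x;z) = Σ_{I ∈ 𝓘_λ} V_λ(x;y_{σ_I}) V_λ(y_{σ_I};z) / V_λ(y_{σ_I};y_{σ_I})` for all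
`x, z` and all `y` with pairwise distinct coordinates.  The assignment `I ↦ σ_I` is encoded by
a function `sig` with the characterizing property `IsSigmaI`. -/
theorem Vlam_reproducing_identity
    (N n : ℕ) (hN : 1 ≤ N) (hn : 1 ≤ n) (lam : Fin N → ℕ) (hlam : ∑ j, lam j = n)
    (sig : (Fin N → Finset (Fin n)) → Equiv.Perm (Fin n))
    (hsig : ∀ I, IsLamPartition N n lam I → IsSigmaI N n lam I (sig I))
    (x z y : Fin n → ℂ) (hy : ∀ a b : Fin n, a ≠ b → y a ≠ y b) :
    Vlam N n lam x z =
      ∑ I ∈ partSet N n lam,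
        Vlam N n lam x (fun c => y (sig I c)) *
            Vlam N n lam (fun c => y (sig I c)) z /
          Vlam N n lam (fun c => y (sig I c)) (fun c => y (sig I c)) := by
  classical
  have hyinj : Function.Injective y := fun a b h => by
    by_contra hne
    exact hy a b hne h
  have hdeg : ∀ a : Fin n, (a : ℕ) < n → ∀ x' : Fin n → ℂ,
      ∃ p : Polynomial ℂ, p.natDegree ≤ n - 1 - (a : ℕ) ∧ ∀ w,
        (Vlam N n lam (Function.update x' a w) z -
          ∑ I ∈ partSet N n lam,
            Vlam N n lam (Function.update x' a w) (fun c => y (sig I c)) *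
                Vlam N n lam (fun c => y (sig I c)) z /
              Vlam N n lam (fun c => y (sig I c)) (fun c => y (sig I c)))
          = Polynomial.eval w p := by
    intro a _ x'
    refine ⟨VlamAux.PV N n lam x' z a - ∑ I ∈ partSet N n lam,
      Polynomial.C (Vlam N n lam (fun c => y (sig I c)) z /
        Vlam N n lam (fun c => y (sig I c)) (fun c => y (sig I c))) *
        VlamAux.PV N n lam x' (fun c => y (sig I c)) a, ?_, ?_⟩
    · refine (Polynomial.natDegree_sub_le _ _).trans
        (max_le (VlamAux.PV_natDegree lam hlam x' z a) ?_)
      refine Polynomial.natDegree_sum_le_of_forall_le _ _ fun I _ => ?_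
      refine (Polynomial.natDegree_mul_le).trans ?_
      rw [Polynomial.natDegree_C]
      simpa using VlamAux.PV_natDegree lam hlam x' (fun c => y (sig I c)) a
    · intro w
      rw [Polynomial.eval_sub, Polynomial.eval_finset_sum, VlamAux.PV_eval]
      congr 1
      refine Finset.sum_congr rfl fun I _ => ?_
      rw [Polynomial.eval_mul, Polynomial.eval_C, VlamAux.PV_eval, mul_div_assoc, mul_comm]
  have hdep : ∀ x1 x2 : Fin n → ℂ, (∀ a : Fin n, (a : ℕ) < n → x1 a = x2 a) →
      (Vlam N n lam x1 z - ∑ I ∈ partSet N n lam,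
          Vlam N n lam x1 (fun c => y (sig I c)) *
              Vlam N n lam (fun c => y (sig I c)) z /
            Vlam N n lam (fun c => y (sig I c)) (fun c => y (sig I c)))
        = (Vlam N n lam x2 z - ∑ I ∈ partSet N n lam,
          Vlam N n lam x2 (fun c => y (sig I c)) *
              Vlam N n lam (fun c => y (sig I c)) z /
            Vlam N n lam (fun c => y (sig I c)) (fun c => y (sig I c))) := by
    intro x1 x2 h
    have hx : x1 = x2 := funext fun a => h a a.isLt
    rw [hx]
  have hvan : ∀ c : Fin n → Fin n, Function.Injective c →
      (Vlam N n lam (fun a => y (c a)) z - ∑ I ∈ partSet N n lam,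
          Vlam N n lam (fun a => y (c a)) (fun c' => y (sig I c')) *
              Vlam N n lam (fun c' => y (sig I c')) z /
            Vlam N n lam (fun c' => y (sig I c')) (fun c' => y (sig I c'))) = 0 := by
    intro c hcinj
    have hcsurj : Function.Surjective c := Finite.injective_iff_surjective.mp hcinj
    set J : Fin N → Finset (Fin n) := fun i => (IminF N n lam i).image c with hJdef
    have hJpart : IsLamPartition N n lam J := by
      constructor
      · intro i
        show ((IminF N n lam i).image c).card = lam i
        rw [Finset.card_image_of_injective _ hcinj, VlamAux.card_IminF lam hlam]
      · intro a
        obtain ⟨a', rfl⟩ := hcsurj a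
        obtain ⟨i, hi, hiu⟩ := VlamAux.IminF_unique lam hlam a'
        refine ⟨i, Finset.mem_image_of_mem c hi, ?_⟩
        intro j hj
        obtain ⟨b', hb', hbe⟩ := Finset.mem_image.1 hj
        have hba : b' = a' := hcinj hbe
        subst hba
        exact hiu j hb'
    have hJmem : J ∈ partSet N n lam := Finset.mem_filter.2 ⟨Finset.mem_univ _, hJpart⟩
    have hsigJ := hsig J hJpart
    have himJ : ∀ i : Fin N, (IminF N n lam i).image c = (IminF N n lam i).image (sig J) := by
      intro i
      rw [hsigJ.1 i]
    have hterms : ∀ I ∈ partSet N n lam, I ≠ J →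
        Vlam N n lam (fun a => y (c a)) (fun c' => y (sig I c')) *
            Vlam N n lam (fun c' => y (sig I c')) z /
          Vlam N n lam (fun c' => y (sig I c')) (fun c' => y (sig I c')) = 0 := by
      intro I hI hne
      have hIpart : IsLamPartition N n lam I := (Finset.mem_filter.1 hI).2
      have hwit : ∃ p : Fin n, ∃ i j : Fin N, p ∈ J i ∧ p ∈ I j ∧ i < j := by
        by_contra hno
        push_neg at hno
        exact hne (VlamAux.blocks_eq hlam hIpart hJpart
          (fun p i j hpJ hpI => not_lt.mpr (hno p i j hpJ hpI)))
      obtain ⟨p, i, j, hpJ, hpI, hij⟩ := hwit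
      have hpJ' : p ∈ (IminF N n lam i).image c := hpJ
      obtain ⟨a0, ha0, ha0e⟩ := Finset.mem_image.1 hpJ'
      have hpI' : p ∈ (IminF N n lam j).image (sig I) := by
        rw [(hsig I hIpart).1 j]; exact hpI
      obtain ⟨b0, hb0, hb0e⟩ := Finset.mem_image.1 hpI'
      have hzero : Vlam N n lam (fun a => y (c a)) (fun c' => y (sig I c')) = 0 :=
        VlamAux.Vlam_eq_zero lam hij ha0 hb0
          (show y (c a0) = y (sig I b0) by rw [ha0e, hb0e])
      rw [hzero, zero_mul, zero_div]
    rw [Finset.sum_eq_single_of_mem J hJmem hterms]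
    have hVJ : Vlam N n lam (fun a => y (c a)) (fun c' => y (sig J c'))
        = Vlam N n lam (fun c' => y (sig J c')) (fun c' => y (sig J c')) :=
      VlamAux.Vlam_reindex lam y hcinj (Equiv.injective (sig J)) himJ
    have hne0 : Vlam N n lam (fun c' => y (sig J c')) (fun c' => y (sig J c')) ≠ 0 :=
      VlamAux.Vlam_ne_zero lam hy (⇑(sig J)) (Equiv.injective (sig J))
    rw [hVJ, mul_div_cancel_left₀ _ hne0]
    rw [VlamAux.Vlam_reindex lam y (Equiv.injective (sig J)) hcinj (fun i => (himJ i).symm),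
      sub_self]
  have hmain := VlamAux.vanish hyinj n le_rfl
    (fun x' => Vlam N n lam x' z - ∑ I ∈ partSet N n lam,
      Vlam N n lam x' (fun c => y (sig I c)) *
          Vlam N n lam (fun c => y (sig I c)) z /
        Vlam N n lam (fun c => y (sig I c)) (fun c => y (sig I c)))
    hdeg hdep hvan x
  exact sub_eq_zero.mp hmain
end
end
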